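/- Let B ⊆ A × A × A be a basic set such that either (a) for every (j,k) ∈ {(1,1),(2,1),(2,2)} at least one of (1,j,k) ∈ B or (2,j,k) ∈ B holds, or (b) for every (j,k) ∈ {(1,1),(1,2),(2,2)} at least one of (1,j,k) ∈ B or (2,j,k) ∈ B holds. Then the entropy limit exists and h(B) = ln 2, i.e., ln(ln c_n)/n → ln 2 as n → ∞. -/

import Mathlib

/-!
Cutting an `(n+1)`-block at its root leaves a root label and two `n`-blocks, and conversely
any two `n`-blocks with root labels `j`, `k` can be grafted under a root `i` with
`(i, j, k) ∈ B`. So if `a`, `b` count the `n`-blocks with root `1`, `2`, each child pair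
`(j, k)` occurring in `B` contributes `a_j a_k` blocks of depth `n + 1`. Under either
hypothesis the pairs `(1,1)`, `(2,2)` and one mixed pair occur, whence
`c_{n+1} ≥ a² + ab + b² ≥ (3/4) c_n²`, and iterating from `c_1 = 2` gives
`c_{n+1} ≥ (4/3) (3/2)^{2^n}`. As there are fewer than `2^n` nodes, also `c_n ≤ 2^{2^n}`.
Thus `ln c_n` lies between two constant multiples of `2^n`, and `ln (ln c_n) / n → ln 2`.
-/

open Filter Real

/-- The set of `n`-blocks of the binary Markov tree-shift over the alphabet `Fin 2`
(symbols `0,1` standing for `1,2`) with basic set `B` of 2-blocks `(i,j,k)`: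
labelings of the binary words of length `< n` such that every node `v` of length
`≤ n-2`, together with its children `v0` and `v1`, forms a pattern in `B`. -/
def Block2 (B : Finset (Fin 2 × Fin 2 × Fin 2)) (n : ℕ) :
    Set ({w : List (Fin 2) // w.length < n} → Fin 2) :=
  {u | ∀ (v : List (Fin 2)) (h : v.length + 2 ≤ n),
    (u ⟨v, by omega⟩,
     u ⟨v ++ [0], by simp; omega⟩,
     u ⟨v ++ [1], by simp; omega⟩) ∈ B}

/-- The `n`-blocks whose root is labeled `i`. -/
def BlockRoot2 (B : Finset (Fin 2 × Fin 2 × Fin 2)) (i : Fin 2) (n : ℕ) :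
    Set ({w : List (Fin 2) // w.length < n} → Fin 2) :=
  {u | u ∈ Block2 B n ∧ ∀ h : 0 < n, u ⟨[], by simpa using h⟩ = i}

abbrev Nodes (n : ℕ) : Type := {w : List (Fin 2) // w.length < n}

instance (n : ℕ) : Finite (Nodes n) := (List.finite_length_lt (Fin 2) n).to_subtype

def Nodes.uncons {n : ℕ} : Nodes (n + 1) → Option (Fin 2 × Nodes n)
  | ⟨[], _⟩ => none
  | ⟨b :: t, h⟩ => some (b, ⟨t, by simpa using h⟩)

theorem Nodes.uncons_injective (n : ℕ) : Function.Injective (@Nodes.uncons n) := by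
  rintro ⟨_ | ⟨b, t⟩, _⟩ ⟨_ | ⟨c, s⟩, _⟩ h <;> simp_all [Nodes.uncons]

theorem Nodes.card_lt (n : ℕ) : Nat.card (Nodes n) < 2 ^ n := by
  induction n with
  | zero =>
    have : IsEmpty (Nodes 0) := ⟨fun w => Nat.not_lt_zero _ w.2⟩
    simp
  | succ n ih =>
    have h := Nat.card_le_card_of_injective _ (Nodes.uncons_injective n)
    rw [Finite.card_option, Nat.card_prod, Nat.card_fin] at h
    rw [pow_succ]
    omega

theorem card_block2_le (B : Finset (Fin 2 × Fin 2 × Fin 2)) (n : ℕ) :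
    Nat.card (Block2 B n) ≤ 2 ^ 2 ^ n :=
  calc Nat.card (Block2 B n) ≤ Nat.card (Nodes n → Fin 2) :=
        Nat.card_le_card_of_injective _ Subtype.val_injective
    _ = 2 ^ Nat.card (Nodes n) := by rw [Nat.card_fun, Nat.card_fin]
    _ ≤ 2 ^ 2 ^ n := Nat.pow_le_pow_right two_pos (Nodes.card_lt n).le

def graft {n : ℕ} (i : Fin 2) (u : Fin 2 → Nodes n → Fin 2) : Nodes (n + 1) → Fin 2
  | ⟨[], _⟩ => i
  | ⟨b :: t, h⟩ => u b ⟨t, by simpa using h⟩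

theorem graft_injective {n : ℕ} {i i' : Fin 2} {u u' : Fin 2 → Nodes n → Fin 2}
    (h : graft i u = graft i' u') : u = u' := by
  funext b ⟨t, ht⟩
  exact congrFun h ⟨b :: t, by simpa using ht⟩

section
variable {B : Finset (Fin 2 × Fin 2 × Fin 2)} {n : ℕ}

theorem root_eq_of_mem_blockRoot2 {i : Fin 2} {u : Nodes n → Fin 2}
    (hu : u ∈ BlockRoot2 B i n) (hn : 0 < n) : u ⟨[], hn⟩ = i :=
  hu.2 hn

theorem graft_mem_blockRoot2 {i : Fin 2} {u : Fin 2 → Nodes n → Fin 2} {p : Fin 2 → Fin 2}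
    (hn : 0 < n) (hB : (i, p 0, p 1) ∈ B) (hu : ∀ b, u b ∈ BlockRoot2 B (p b) n) :
    graft i u ∈ BlockRoot2 B i (n + 1) := by
  refine ⟨?_, fun _ => rfl⟩
  rintro (_ | ⟨b, v⟩) hv
  · show (i, u 0 ⟨[], hn⟩, u 1 ⟨[], hn⟩) ∈ B
    rwa [root_eq_of_mem_blockRoot2 (hu 0) hn, root_eq_of_mem_blockRoot2 (hu 1) hn]
  · exact (hu b).1 v (by simpa using hv)

theorem card_block2_eq_add (hn : 0 < n) :
    Nat.card (Block2 B n) = Nat.card (BlockRoot2 B 0 n) + Nat.card (BlockRoot2 B 1 n) := by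
  have hunion : Block2 B n = BlockRoot2 B 0 n ∪ BlockRoot2 B 1 n := by
    ext u
    simp only [BlockRoot2, Set.mem_union]
    constructor
    · intro hu
      rcases Fin.exists_fin_two.mp ⟨u ⟨[], hn⟩, rfl⟩ with h | h
      exacts [Or.inl ⟨hu, fun _ => h⟩, Or.inr ⟨hu, fun _ => h⟩]
    · rintro (hu | hu) <;> exact hu.1
  have hdisj : Disjoint (BlockRoot2 B 0 n) (BlockRoot2 B 1 n) :=
    Set.disjoint_left.mpr fun u h₀ h₁ =>
      zero_ne_one ((root_eq_of_mem_blockRoot2 h₀ hn).symm.trans (root_eq_of_mem_blockRoot2 h₁ hn))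
  simp only [hunion, Nat.card_coe_set_eq, Set.ncard_union_eq hdisj]

theorem sum_card_mul_card_le_card_block2_succ (hn : 0 < n) (P : Finset (Fin 2 × Fin 2))
    (hP : ∀ p ∈ P, ∃ i, (i, p) ∈ B) :
    ∑ p ∈ P, Nat.card (BlockRoot2 B p.1 n) * Nat.card (BlockRoot2 B p.2 n) ≤
      Nat.card (Block2 B (n + 1)) := by
  choose root hroot using hP
  let f : (Σ p : P, BlockRoot2 B p.1.1 n × BlockRoot2 B p.1.2 n) → Block2 B (n + 1) :=
    fun ⟨p, u₀, u₁⟩ => ⟨graft (root p.1 p.2) ![u₀.1, u₁.1],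
      (graft_mem_blockRoot2 (p := ![p.1.1, p.1.2]) hn (hroot p.1 p.2)
        (Fin.forall_fin_two.mpr ⟨u₀.2, u₁.2⟩)).1⟩
  have hf : Function.Injective f := by
    rintro ⟨p, u₀, u₁⟩ ⟨p', u₀', u₁'⟩ h
    have hu := graft_injective (congrArg Subtype.val h)
    have h₀ : u₀.1 = u₀'.1 := congrFun hu 0
    have h₁ : u₁.1 = u₁'.1 := congrFun hu 1
    obtain rfl : p = p' := by
      refine Subtype.ext (Prod.ext ?_ ?_)
      · rw [← root_eq_of_mem_blockRoot2 u₀.2 hn, ← root_eq_of_mem_blockRoot2 u₀'.2 hn, h₀]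
      · rw [← root_eq_of_mem_blockRoot2 u₁.2 hn, ← root_eq_of_mem_blockRoot2 u₁'.2 hn, h₁]
    rw [Subtype.ext h₀, Subtype.ext h₁]
  have := Nat.card_le_card_of_injective f hf
  simpa only [Nat.card_sigma, Nat.card_prod, Finset.sum_coe_sort P
    (fun p => Nat.card (BlockRoot2 B p.1 n) * Nat.card (BlockRoot2 B p.2 n))] using this

theorem three_mul_sq_card_block2_le (h₀₀ : ∃ i, (i, 0, 0) ∈ B) (h₁₁ : ∃ i, (i, 1, 1) ∈ B)
    (hmix : (∃ i, (i, 0, 1) ∈ B) ∨ ∃ i, (i, 1, 0) ∈ B) (hn : 0 < n) :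
    3 * Nat.card (Block2 B n) ^ 2 ≤ 4 * Nat.card (Block2 B (n + 1)) := by
  set a := Nat.card (BlockRoot2 B 0 n)
  set b := Nat.card (BlockRoot2 B 1 n)
  have hsum : a * a + a * b + b * b ≤ Nat.card (Block2 B (n + 1)) := by
    obtain ⟨q, hq, h⟩ : ∃ q : Fin 2 × Fin 2, (q = (0, 1) ∨ q = (1, 0)) ∧ ∃ i, (i, q) ∈ B :=
      hmix.elim (⟨_, .inl rfl, ·⟩) (⟨_, .inr rfl, ·⟩)
    have := sum_card_mul_card_le_card_block2_succ hn {(0, 0), q, (1, 1)}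
      (by simp only [Finset.mem_insert, Finset.mem_singleton, forall_eq_or_imp, forall_eq]
          exact ⟨h₀₀, h, h₁₁⟩)
    rcases hq with rfl | rfl <;>
      rw [Finset.sum_insert (by decide), Finset.sum_insert (by decide), Finset.sum_singleton]
        at this <;>
      linarith [mul_comm a b]
  rw [card_block2_eq_add hn]
  nlinarith [two_mul_le_add_sq a b]

theorem two_le_card_block2_one : 2 ≤ Nat.card (Block2 B 1) := by
  let f : Fin 2 → Block2 B 1 := fun i => ⟨fun _ => i, fun v hv => by simp at hv⟩
  have hf : Function.Injective f := fun i j h => congrFun (congrArg Subtype.val h) ⟨[], by simp⟩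
  simpa using Nat.card_le_card_of_injective f hf

end

theorem pow_two_pow_le_of_sq_le {x : ℕ → ℝ} {a : ℝ} (ha : 0 ≤ a) (h₀ : a ≤ x 0)
    (hx : ∀ n, x n ^ 2 ≤ x (n + 1)) (n : ℕ) : a ^ 2 ^ n ≤ x n := by
  induction n with
  | zero => simpa
  | succ n ih =>
    calc a ^ 2 ^ (n + 1) = (a ^ 2 ^ n) ^ 2 := by rw [pow_succ, pow_mul]
      _ ≤ x n ^ 2 := pow_le_pow_left₀ (by positivity) ih 2
      _ ≤ x (n + 1) := hx n

theorem two_pow_mul_log_le_log_card_block2 {B : Finset (Fin 2 × Fin 2 × Fin 2)}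
    (hrec : ∀ n, 0 < n → 3 * Nat.card (Block2 B n) ^ 2 ≤ 4 * Nat.card (Block2 B (n + 1)))
    (n : ℕ) : 2 ^ n * log (3 / 2) ≤ log (Nat.card (Block2 B (n + 1))) := by
  have hx : (3 / 2 : ℝ) ^ 2 ^ n ≤ 3 / 4 * Nat.card (Block2 B (n + 1)) := by
    refine pow_two_pow_le_of_sq_le (x := fun n => 3 / 4 * (Nat.card (Block2 B (n + 1)) : ℝ))
      (by norm_num) ?_ (fun n => ?_) n
    · have : (2 : ℝ) ≤ Nat.card (Block2 B 1) := by exact_mod_cast two_le_card_block2_one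
      linarith
    · have : (3 * Nat.card (Block2 B (n + 1)) ^ 2 : ℝ) ≤ 4 * Nat.card (Block2 B (n + 2)) := by
        exact_mod_cast hrec (n + 1) n.succ_pos
      linarith
  calc 2 ^ n * log (3 / 2) = log ((3 / 2 : ℝ) ^ 2 ^ n) := by rw [log_pow]; push_cast; ring
    _ ≤ log (Nat.card (Block2 B (n + 1))) := log_le_log (by positivity) (by linarith)

theorem log_card_block2_le (B : Finset (Fin 2 × Fin 2 × Fin 2)) {n : ℕ}
    (hB : 0 < Nat.card (Block2 B n)) : log (Nat.card (Block2 B n)) ≤ log 2 * 2 ^ n := by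
  calc log (Nat.card (Block2 B n)) ≤ log ((2 : ℝ) ^ 2 ^ n) :=
        log_le_log (by exact_mod_cast hB) (by exact_mod_cast card_block2_le B n)
    _ = log 2 * 2 ^ n := by rw [log_pow]; push_cast; ring

theorem tendsto_log_div_of_le_mul_pow {f : ℕ → ℝ} {r a C : ℝ} (hr : 0 < r) (ha : 0 < a)
    (hC : 0 < C) (hlo : ∀ᶠ n in atTop, a * r ^ n ≤ f n) (hhi : ∀ᶠ n in atTop, f n ≤ C * r ^ n) :
    Tendsto (fun n : ℕ => log (f n) / n) atTop (nhds (log r)) := by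
  have hlim (c : ℝ) : Tendsto (fun n : ℕ => log c / n + log r) atTop (nhds (log r)) := by
    simpa using (tendsto_const_div_atTop_nhds_zero_nat (log c)).add_const (log r)
  have hlog {c : ℝ} (hc : 0 < c) {n : ℕ} (hn : 0 < n) :
      log (c * r ^ n) / n = log c / n + log r := by
    rw [log_mul hc.ne' (pow_pos hr n).ne', log_pow]
    field_simp
  refine tendsto_of_tendsto_of_tendsto_of_le_of_le' (hlim a) (hlim C) ?_ ?_
  · filter_upwards [hlo, eventually_gt_atTop 0] with n hlo hn
    rw [← hlog ha hn]
    exact div_le_div_of_nonneg_right (log_le_log (by positivity) hlo) n.cast_nonneg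
  · filter_upwards [hlo, hhi, eventually_gt_atTop 0] with n hlo hhi hn
    rw [← hlog hC hn]
    have hpos : 0 < f n := (by positivity : 0 < a * r ^ n).trans_le hlo
    exact div_le_div_of_nonneg_right (log_le_log hpos hhi) n.cast_nonneg

/-- If for every `(j,k)` in `{(1,1),(2,1),(2,2)}` (case (a)) or in `{(1,1),(1,2),(2,2)}`
(case (b)) at least one of `(1,j,k)` or `(2,j,k)` belongs to `B`, then the entropy limit
exists and equals `ln 2`. (Symbols `1,2` are `0,1 : Fin 2`.) -/
theorem entropy_eq_log_two_of_almost_complementary (B : Finset (Fin 2 × Fin 2 × Fin 2))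
    (hcase :
      ((((0 : Fin 2), (0 : Fin 2), (0 : Fin 2)) ∈ B ∨ ((1 : Fin 2), (0 : Fin 2), (0 : Fin 2)) ∈ B) ∧
       (((0 : Fin 2), (1 : Fin 2), (0 : Fin 2)) ∈ B ∨ ((1 : Fin 2), (1 : Fin 2), (0 : Fin 2)) ∈ B) ∧
       (((0 : Fin 2), (1 : Fin 2), (1 : Fin 2)) ∈ B ∨ ((1 : Fin 2), (1 : Fin 2), (1 : Fin 2)) ∈ B)) ∨
      ((((0 : Fin 2), (0 : Fin 2), (0 : Fin 2)) ∈ B ∨ ((1 : Fin 2), (0 : Fin 2), (0 : Fin 2)) ∈ B) ∧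
       (((0 : Fin 2), (0 : Fin 2), (1 : Fin 2)) ∈ B ∨ ((1 : Fin 2), (0 : Fin 2), (1 : Fin 2)) ∈ B) ∧
       (((0 : Fin 2), (1 : Fin 2), (1 : Fin 2)) ∈ B ∨ ((1 : Fin 2), (1 : Fin 2), (1 : Fin 2)) ∈ B))) :
    Tendsto (fun n : ℕ => Real.log (Real.log (Nat.card (Block2 B n))) / n)
      atTop (nhds (Real.log 2)) := by
  have hpair {p : Fin 2 × Fin 2} (h : (0, p) ∈ B ∨ (1, p) ∈ B) : ∃ i, (i, p) ∈ B :=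
    h.elim (⟨0, ·⟩) (⟨1, ·⟩)
  have hlower : ∀ n, 2 ^ n * log (3 / 2) ≤ log (Nat.card (Block2 B (n + 1))) := by
    refine two_pow_mul_log_le_log_card_block2 fun n hn => ?_
    rcases hcase with ⟨h₀₀, h₁₀, h₁₁⟩ | ⟨h₀₀, h₀₁, h₁₁⟩
    · exact three_mul_sq_card_block2_le (hpair h₀₀) (hpair h₁₁) (.inr (hpair h₁₀)) hn
    · exact three_mul_sq_card_block2_le (hpair h₀₀) (hpair h₁₁) (.inl (hpair h₀₁)) hn
  refine tendsto_log_div_of_le_mul_pow two_pos (a := log (3 / 2) / 2) (C := log 2)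
    (by positivity) (by positivity) ?_ ?_ <;>
    filter_upwards [eventually_gt_atTop 0] with n hn <;>
    obtain ⟨m, rfl⟩ := Nat.exists_eq_add_one_of_ne_zero hn.ne'
  · exact (by ring : log (3 / 2) / 2 * 2 ^ (m + 1) = 2 ^ m * log (3 / 2)).trans_le (hlower m)
  · have hpos : 0 < Nat.card (Block2 B (m + 1)) := Nat.pos_of_ne_zero fun h =>
      (by positivity : (0 : ℝ) < 2 ^ m * log (3 / 2)).not_ge (by simpa [h] using hlower m)
    exact log_card_block2_le B hpos
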